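/- Let m ≥ 0 and j ≥ 0 be integers, and let n₁,…,n_m ≥ 2 be integers such that ∑_{i=1}^m (nᵢ−1)/nᵢ + j = 2. Then the multiset of rational numbers {(n₁−1)/n₁, …, (n_m−1)/n_m} together with j copies of 1 is exactly one of the following: {1,1}; {1, 1/2, 1/2}; {2/3, 2/3, 2/3}; {1/2, 2/3, 5/6}; {1/2, 3/4, 3/4}; {1/2, 1/2, 1/2, 1/2}. -/
import Mathlib


lemma inv_nat_eq (a k : ℕ) (ha : 0 < a) (hk : 0 < k) (h : 1/(a:ℚ) = 1/(k:ℚ)) : a = k := by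
  have ha' : (a:ℚ) ≠ 0 := by positivity
  have hk' : (k:ℚ) ≠ 0 := by positivity
  field_simp at h
  exact_mod_cast h.symm

lemma pair_solve (b c : ℕ) (hb : 3 ≤ b) (hc : 3 ≤ c) (h : 1/(b:ℚ) + 1/(c:ℚ) = 1/2) :
    (b = 3 ∧ c = 6) ∨ (b = 4 ∧ c = 4) ∨ (b = 6 ∧ c = 3) := by
  have hbq : (0:ℚ) < b := by positivity
  have hcq : (0:ℚ) < c := by positivity
  have hcle : 1/(c:ℚ) ≤ 1/3 := by
    apply one_div_le_one_div_of_le (by norm_num)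
    exact_mod_cast hc
  have h6 : 1/6 ≤ 1/(b:ℚ) := by linarith
  have hb6 : b ≤ 6 := by
    have : (b:ℚ) ≤ 6 := by
      rw [div_le_div_iff₀ (by norm_num) hbq] at h6; linarith
    exact_mod_cast this
  interval_cases b
  · left; refine ⟨rfl, ?_⟩
    have hc6 : 1/(c:ℚ) = 1/6 := by push_cast at h; linarith
    exact inv_nat_eq c 6 (by omega) (by norm_num) hc6
  · right; left; refine ⟨rfl, ?_⟩
    have hc4 : 1/(c:ℚ) = 1/4 := by push_cast at h; linarith
    exact inv_nat_eq c 4 (by omega) (by norm_num) hc4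
  · exfalso
    have hc10 : 1/(c:ℚ) = 3/10 := by push_cast at h; linarith
    rw [div_eq_div_iff (ne_of_gt hcq) (by norm_num : (10:ℚ) ≠ 0)] at hc10
    have : (10:ℕ) = 3 * c := by exact_mod_cast hc10
    omega
  · right; right; refine ⟨rfl, ?_⟩
    have hc3 : 1/(c:ℚ) = 1/3 := by push_cast at h; linarith
    exact inv_nat_eq c 3 (by omega) (by norm_num) hc3

lemma sw12 {α : Type*} (x y z : α) : ({x,y,z} : Multiset α) = {y,x,z} := by
  simp only [Multiset.insert_eq_cons]
  rw [Multiset.cons_swap]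

lemma sw23 {α : Type*} (x y z : α) : ({x,y,z} : Multiset α) = {x,z,y} := by
  simp only [Multiset.insert_eq_cons, ← Multiset.cons_zero]
  rw [Multiset.cons_swap y z]

/-- Classification of boundary coefficients of log Calabi–Yau structures on `ℙ¹`:
if `n₁,…,n_m ≥ 2` and `∑ (nᵢ−1)/nᵢ + j = 2`, then the multiset
`{(nᵢ−1)/nᵢ} + j·{1}` is one of the six listed possibilities. -/
theorem stmt7 (m j : ℕ) (n : Fin m → ℕ) (hn : ∀ i, 2 ≤ n i)
    (hsum : (∑ i, ((n i : ℚ) - 1) / (n i)) + (j : ℚ) = 2) :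
    (Multiset.map (fun i => ((n i : ℚ) - 1) / (n i)) Finset.univ.val
        + Multiset.replicate j (1 : ℚ)) = ({1, 1} : Multiset ℚ) ∨
    (Multiset.map (fun i => ((n i : ℚ) - 1) / (n i)) Finset.univ.val
        + Multiset.replicate j (1 : ℚ)) = ({1, 1/2, 1/2} : Multiset ℚ) ∨
    (Multiset.map (fun i => ((n i : ℚ) - 1) / (n i)) Finset.univ.val
        + Multiset.replicate j (1 : ℚ)) = ({2/3, 2/3, 2/3} : Multiset ℚ) ∨
    (Multiset.map (fun i => ((n i : ℚ) - 1) / (n i)) Finset.univ.val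
        + Multiset.replicate j (1 : ℚ)) = ({1/2, 2/3, 5/6} : Multiset ℚ) ∨
    (Multiset.map (fun i => ((n i : ℚ) - 1) / (n i)) Finset.univ.val
        + Multiset.replicate j (1 : ℚ)) = ({1/2, 3/4, 3/4} : Multiset ℚ) ∨
    (Multiset.map (fun i => ((n i : ℚ) - 1) / (n i)) Finset.univ.val
        + Multiset.replicate j (1 : ℚ)) = ({1/2, 1/2, 1/2, 1/2} : Multiset ℚ) := by
  have hq : ∀ i, (0:ℚ) < n i := fun i => by
    have h := hn i
    exact_mod_cast show 0 < n i by omega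
  have hterm : ∀ i, ((n i : ℚ) - 1) / (n i) = 1 - 1/(n i) := fun i => by
    rw [sub_div, div_self (ne_of_gt (hq i))]
  have hinvle : ∀ i, 1/(n i:ℚ) ≤ 1/2 := fun i => by
    apply one_div_le_one_div_of_le (by norm_num)
    exact_mod_cast hn i
  have hinvpos : ∀ i, (0:ℚ) < 1/(n i:ℚ) := fun i => one_div_pos.mpr (hq i)
  rw [Finset.sum_congr rfl fun i _ => hterm i] at hsum
  -- bound m + 2j ≤ 4
  have hlb : (m:ℚ) * (1/2) ≤ ∑ i, (1 - 1/(n i:ℚ)) := by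
    have := Finset.card_nsmul_le_sum Finset.univ (fun i => 1 - 1/(n i:ℚ)) (1/2)
      (fun i _ => by linarith [hinvle i])
    simpa [nsmul_eq_mul] using this
  have hmj : m + 2 * j ≤ 4 := by
    have h4 : ((m + 2*j : ℕ) : ℚ) ≤ 4 := by push_cast; linarith
    exact_mod_cast h4
  have hcase : (j = 0 ∧ (m = 0 ∨ m = 1 ∨ m = 2 ∨ m = 3 ∨ m = 4)) ∨
      (j = 1 ∧ (m = 0 ∨ m = 1 ∨ m = 2)) ∨ (j = 2 ∧ m = 0) := by omega
  rcases hcase with ⟨hj, hm⟩ | ⟨hj, hm⟩ | ⟨hj, hm⟩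
  · -- j = 0
    subst hj
    rcases hm with hm | hm | hm | hm | hm
    · subst hm; simp at hsum
    · subst hm
      exfalso
      simp only [Fin.sum_univ_one, Nat.cast_zero] at hsum
      linarith [hinvpos 0]
    · subst hm
      exfalso
      simp only [Fin.sum_univ_two, Nat.cast_zero] at hsum
      linarith [hinvpos 0, hinvpos 1]
    · -- m = 3
      subst hm
      simp only [Fin.sum_univ_three, Nat.cast_zero] at hsum
      have E : 1/(n 0:ℚ) + 1/(n 1) + 1/(n 2) = 1 := by linarith
      have hmap : Multiset.map (fun i => ((n i : ℚ) - 1) / (n i)) Finset.univ.val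
          = {((n 0:ℚ)-1)/(n 0), ((n 1:ℚ)-1)/(n 1), ((n 2:ℚ)-1)/(n 2)} := rfl
      have h2or : ∀ i : Fin 3, n i = 2 ∨ 3 ≤ n i := fun i => by have := hn i; omega
      have hi3 : ∀ i : Fin 3, 3 ≤ n i → 1/(n i:ℚ) ≤ 1/3 := fun i h => by
        apply one_div_le_one_div_of_le (by norm_num); exact_mod_cast h
      have fin : ∀ (a b c : ℕ) (x y z : ℚ), n 0 = a → n 1 = b → n 2 = c →
          ((a:ℚ)-1)/a = x → ((b:ℚ)-1)/b = y → ((c:ℚ)-1)/c = z →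
          (Multiset.map (fun i => ((n i : ℚ) - 1) / (n i)) Finset.univ.val
            + Multiset.replicate 0 (1 : ℚ))
          = {x, y, z} := by
        intro a b c x y z ha hb hc hx hy hz
        rw [hmap, Multiset.replicate_zero, add_zero, ha, hb, hc, hx, hy, hz]
      rcases h2or 0 with h0 | h0 <;> rcases h2or 1 with h1 | h1 <;>
        rcases h2or 2 with h2 | h2
      · exfalso; rw [h0, h1, h2] at E; norm_num at E
      · exfalso
        rw [h0, h1] at E; push_cast at E
        linarith [hinvpos 2]
      · exfalso
        rw [h0, h2] at E; push_cast at E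
        linarith [hinvpos 1]
      · -- n 0 = 2
        have E' : 1/(n 1:ℚ) + 1/(n 2) = 1/2 := by
          rw [h0] at E; push_cast at E; linarith
        rcases pair_solve _ _ h1 h2 E' with ⟨hb, hc⟩ | ⟨hb, hc⟩ | ⟨hb, hc⟩
        · right; right; right; left
          rw [fin 2 3 6 (1/2) (2/3) (5/6) h0 hb hc (by norm_num) (by norm_num) (by norm_num)]
        · right; right; right; right; left
          rw [fin 2 4 4 (1/2) (3/4) (3/4) h0 hb hc (by norm_num) (by norm_num) (by norm_num)]
        · right; right; right; left
          rw [fin 2 6 3 (1/2) (5/6) (2/3) h0 hb hc (by norm_num) (by norm_num) (by norm_num), sw23]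
      · exfalso
        rw [h1, h2] at E; push_cast at E
        linarith [hinvpos 0]
      · -- n 1 = 2
        have E' : 1/(n 0:ℚ) + 1/(n 2) = 1/2 := by
          rw [h1] at E; push_cast at E; linarith
        rcases pair_solve _ _ h0 h2 E' with ⟨ha, hc⟩ | ⟨ha, hc⟩ | ⟨ha, hc⟩
        · right; right; right; left
          rw [fin 3 2 6 (2/3) (1/2) (5/6) ha h1 hc (by norm_num) (by norm_num) (by norm_num), sw12]
        · right; right; right; right; left
          rw [fin 4 2 4 (3/4) (1/2) (3/4) ha h1 hc (by norm_num) (by norm_num) (by norm_num), sw12]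
        · right; right; right; left
          rw [fin 6 2 3 (5/6) (1/2) (2/3) ha h1 hc (by norm_num) (by norm_num) (by norm_num), sw12, sw23]
      · -- n 2 = 2
        have E' : 1/(n 0:ℚ) + 1/(n 1) = 1/2 := by
          rw [h2] at E; push_cast at E; linarith
        rcases pair_solve _ _ h0 h1 E' with ⟨ha, hb⟩ | ⟨ha, hb⟩ | ⟨ha, hb⟩
        · right; right; right; left
          rw [fin 3 6 2 (2/3) (5/6) (1/2) ha hb h2 (by norm_num) (by norm_num) (by norm_num), sw23, sw12]
        · right; right; right; right; left
          rw [fin 4 4 2 (3/4) (3/4) (1/2) ha hb h2 (by norm_num) (by norm_num) (by norm_num), sw23, sw12]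
        · right; right; right; left
          rw [fin 6 3 2 (5/6) (2/3) (1/2) ha hb h2 (by norm_num) (by norm_num) (by norm_num), sw23, sw12, sw23]
      · -- all ≥ 3
        have e0 : 1/(n 0:ℚ) = 1/3 := by linarith [hi3 0 h0, hi3 1 h1, hi3 2 h2]
        have e1 : 1/(n 1:ℚ) = 1/3 := by linarith [hi3 0 h0, hi3 1 h1, hi3 2 h2]
        have e2 : 1/(n 2:ℚ) = 1/3 := by linarith [hi3 0 h0, hi3 1 h1, hi3 2 h2]
        have ha := inv_nat_eq _ 3 (by have := hn 0; omega) (by norm_num) e0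
        have hb := inv_nat_eq _ 3 (by have := hn 1; omega) (by norm_num) e1
        have hc := inv_nat_eq _ 3 (by have := hn 2; omega) (by norm_num) e2
        right; right; left
        rw [fin 3 3 3 (2/3) (2/3) (2/3) ha hb hc (by norm_num) (by norm_num) (by norm_num)]
    · -- m = 4
      subst hm
      simp only [Fin.sum_univ_four, Nat.cast_zero] at hsum
      have e0 : 1/(n 0:ℚ) = 1/2 := by linarith [hinvle 0, hinvle 1, hinvle 2, hinvle 3]
      have e1 : 1/(n 1:ℚ) = 1/2 := by linarith [hinvle 0, hinvle 1, hinvle 2, hinvle 3]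
      have e2 : 1/(n 2:ℚ) = 1/2 := by linarith [hinvle 0, hinvle 1, hinvle 2, hinvle 3]
      have e3 : 1/(n 3:ℚ) = 1/2 := by linarith [hinvle 0, hinvle 1, hinvle 2, hinvle 3]
      have hv0 := inv_nat_eq _ 2 (by have := hn 0; omega) (by norm_num) e0
      have hv1 := inv_nat_eq _ 2 (by have := hn 1; omega) (by norm_num) e1
      have hv2 := inv_nat_eq _ 2 (by have := hn 2; omega) (by norm_num) e2
      have hv3 := inv_nat_eq _ 2 (by have := hn 3; omega) (by norm_num) e3
      right; right; right; right; right
      have hmap : Multiset.map (fun i => ((n i : ℚ) - 1) / (n i)) Finset.univ.val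
          = {((n 0:ℚ)-1)/(n 0), ((n 1:ℚ)-1)/(n 1), ((n 2:ℚ)-1)/(n 2), ((n 3:ℚ)-1)/(n 3)} := rfl
      rw [hmap, hv0, hv1, hv2, hv3, Multiset.replicate_zero, add_zero]
      norm_num
  · -- j = 1
    subst hj
    rcases hm with hm | hm | hm
    · subst hm; simp at hsum
    · subst hm
      exfalso
      simp only [Fin.sum_univ_one, Nat.cast_one] at hsum
      linarith [hinvpos 0]
    · subst hm
      simp only [Fin.sum_univ_two, Nat.cast_one] at hsum
      have e0 : 1/(n 0:ℚ) = 1/2 := by linarith [hinvle 0, hinvle 1]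
      have e1 : 1/(n 1:ℚ) = 1/2 := by linarith [hinvle 0, hinvle 1]
      have ha := inv_nat_eq _ 2 (by have := hn 0; omega) (by norm_num) e0
      have hb := inv_nat_eq _ 2 (by have := hn 1; omega) (by norm_num) e1
      right; left
      have hmap : Multiset.map (fun i => ((n i : ℚ) - 1) / (n i)) Finset.univ.val
          = {((n 0:ℚ)-1)/(n 0), ((n 1:ℚ)-1)/(n 1)} := rfl
      rw [hmap, ha, hb]
      rw [show (Multiset.replicate 1 (1:ℚ)) = {1} from rfl, add_comm, Multiset.singleton_add]
      norm_num
  · -- j = 2, m = 0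
    subst hj; subst hm
    left
    rw [show (Multiset.map (fun i => ((n i : ℚ) - 1) / (n i)) Finset.univ.val) = 0 from rfl,
      zero_add]
    rfl
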